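/- The system ẋ = x(x+1), ẏ = y^2 + (ax+b)y + cx^2 + dx + e has no periodic orbits: every periodic solution of a planar C¹ vector field must enclose an equilibrium point, but all equilibria of this system lie on the invariant lines x = 0 and x = -1, which no periodic orbit can cross. -/

import Mathlib

/-!
The equation for `x` does not involve `y`, so `x` is a periodic solution of the scalar autonomous
equation `x' = x (x + 1)`. A periodic solution of a scalar autonomous equation with locally
Lipschitz right-hand side is constant: at a maximum of the solution the right-hand side vanishes,
and uniqueness of solutions pins the solution to that equilibrium. Once `x` is constant, the
equation for `y` is scalar autonomous as well, so `y` is constant too.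
-/

open Set Function

theorem Function.Periodic.eq_of_hasDerivAt_comp {f : ℝ → ℝ} (hf : LocallyLipschitz f)
    {u : ℝ → ℝ} (hu : ∀ t, HasDerivAt u (f (u t)) t) {T : ℝ} (hper : Periodic u T)
    (hT : T ≠ 0) (t s : ℝ) : u t = u s := by
  have hcompact : IsCompact (range u) :=
    hper.compact_of_continuous hT (continuous_iff_continuousAt.2 fun t => (hu t).continuousAt)
  obtain ⟨_, ⟨t₀, rfl⟩, hmax⟩ := hcompact.exists_isGreatest (range_nonempty u)
  have hequil : f (u t₀) = 0 :=
    IsLocalMax.hasDerivAt_eq_zero (Filter.Eventually.of_forall fun t => hmax ⟨t, rfl⟩) (hu t₀)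
  obtain ⟨K, hK⟩ := hf.locallyLipschitzOn.exists_lipschitzOnWith_of_compact hcompact
  have hconst : u = fun _ => u t₀ :=
    ODE_solution_unique_univ (v := fun _ => f) (s := fun _ => range u) (t₀ := t₀)
      (fun _ => hK) (fun t => ⟨hu t, mem_range_self t⟩)
      (fun t => ⟨hequil ▸ hasDerivAt_const t (u t₀), mem_range_self t₀⟩) rfl
  exact (congrFun hconst t).trans (congrFun hconst s).symm

theorem stmt_9 (a b c d e : ℝ) (γ : ℝ → ℝ × ℝ)
    (hode : ∀ t : ℝ, HasDerivAt γ
      ((γ t).1 * ((γ t).1 + 1),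
       (γ t).2 ^ 2 + (a * (γ t).1 + b) * (γ t).2 + c * (γ t).1 ^ 2 +
         d * (γ t).1 + e) t)
    (T : ℝ) (hT : 0 < T) (hper : ∀ t, γ (t + T) = γ t) :
    ∀ t s : ℝ, γ t = γ s := by
  have hx : ∀ t, HasDerivAt (fun t => (γ t).1) ((γ t).1 * ((γ t).1 + 1)) t := fun t =>
    (ContinuousLinearMap.fst ℝ ℝ ℝ).hasFDerivAt.comp_hasDerivAt t (hode t)
  have hx_const := Periodic.eq_of_hasDerivAt_comp
    (show ContDiff ℝ 1 fun x : ℝ => x * (x + 1) by fun_prop).locallyLipschitz hx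
    (fun t => congrArg Prod.fst (hper t)) hT.ne'
  set x₀ := (γ 0).1
  have hy : ∀ t, HasDerivAt (fun t => (γ t).2)
      ((γ t).2 ^ 2 + (a * x₀ + b) * (γ t).2 + c * x₀ ^ 2 + d * x₀ + e) t := fun t => by
    have hsnd := (ContinuousLinearMap.snd ℝ ℝ ℝ).hasFDerivAt.comp_hasDerivAt t (hode t)
    rwa [hx_const t 0] at hsnd
  have hy_const := Periodic.eq_of_hasDerivAt_comp
    (show ContDiff ℝ 1 fun y : ℝ => y ^ 2 + (a * x₀ + b) * y + c * x₀ ^ 2 + d * x₀ + e by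
      fun_prop).locallyLipschitz hy (fun t => congrArg Prod.snd (hper t)) hT.ne'
  exact fun t s => Prod.ext (hx_const t s) (hy_const t s)
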